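/- Suppose in addition that p > 0 and p ∈ W¹_{2,loc}(ℝ). Then for every φ ∈ W²₂(ℝ) with compact support and every u ∈ Dom(L), the product φ·u belongs to Dom(L₀₀); in particular φu and (φu)^[1] are locally absolutely continuous, l[φu] ∈ L²(ℝ), and supp(φu) is compact. -/

import Mathlib

open MeasureTheory Complex Filter Set

noncomputable section

/-- The complex Hilbert space `L²(ℝ)`. -/
abbrev Hsp : Type := Lp ℂ 2 (volume : Measure ℝ)

/-- `u` is locally absolutely continuous on `ℝ` with a.e. derivative `g`
(i.e. `u` is the indefinite integral of the locally integrable function `g`). -/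
def HasLocDeriv (u g : ℝ → ℂ) : Prop :=
  LocallyIntegrable g volume ∧ ∀ x : ℝ, u x = u 0 + ∫ t in (0:ℝ)..x, g t

lemma HasLocDeriv.intervalIntegrable {u g : ℝ → ℂ} (h : HasLocDeriv u g) (a b : ℝ) :
    IntervalIntegrable g volume a b :=
  (h.1.integrableOn_isCompact isCompact_uIcc).intervalIntegrable

lemma HasLocDeriv.congr_fun {u v g : ℝ → ℂ} (h : HasLocDeriv u g) (huv : ∀ x, v x = u x) :
    HasLocDeriv v g :=
  ⟨h.1, fun x => by rw [huv x, huv 0]; exact h.2 x⟩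

lemma HasLocDeriv.zero : HasLocDeriv (0 : ℝ → ℂ) 0 := by
  refine ⟨locallyIntegrable_const (0 : ℂ), fun x => by simp⟩

lemma HasLocDeriv.add {u g v h' : ℝ → ℂ} (hu : HasLocDeriv u g) (hv : HasLocDeriv v h') :
    HasLocDeriv (fun x => u x + v x) (fun x => g x + h' x) := by
  refine ⟨hu.1.add hv.1, fun x => ?_⟩
  show u x + v x = u 0 + v 0 + ∫ t in (0:ℝ)..x, (g t + h' t)
  rw [intervalIntegral.integral_add (hu.intervalIntegrable 0 x) (hv.intervalIntegrable 0 x),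
    hu.2 x, hv.2 x]
  ring

lemma HasLocDeriv.const_mul {u g : ℝ → ℂ} (c : ℂ) (hu : HasLocDeriv u g) :
    HasLocDeriv (fun x => c * u x) (fun x => c * g x) := by
  have hli : LocallyIntegrable (fun x => c * g x) volume := hu.1.smul c
  refine ⟨hli, fun x => ?_⟩
  have h : ∫ t in (0:ℝ)..x, c * g t = c * ∫ t in (0:ℝ)..x, g t := by
    simpa [smul_eq_mul] using intervalIntegral.integral_smul c g (a := (0:ℝ)) (b := x) (μ := volume)
  show c * u x = c * u 0 + ∫ t in (0:ℝ)..x, c * g t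
  rw [h, hu.2 x]
  ring

/-- The first quasi-derivative `u^{[1]} = p u' - (Q + i r) u`. -/
def qd1 (p Q r : ℝ → ℝ) (u u' : ℝ → ℂ) : ℝ → ℂ :=
  fun x => (p x : ℂ) * u' x - ((Q x : ℂ) + Complex.I * (r x : ℂ)) * u x

/-- `u` belongs (locally) to the domain of the quasi-differential expression:
`u` is locally absolutely continuous with derivative `u'` and the first quasi-derivative
`u^{[1]} = p u' - (Q + i r) u` is locally absolutely continuous with derivative `w`. -/
def QDom (p Q s r : ℝ → ℝ) (u u' w : ℝ → ℂ) : Prop :=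
  HasLocDeriv u u' ∧ HasLocDeriv (qd1 p Q r u u') w

/-- The quasi-differential expression `l[u] = -u^{[2]}` where
`u^{[2]} = (u^{[1]})' + ((Q - i r)/p) u^{[1]} + ((Q² + r²)/p - s) u`. -/
def lExpr (p Q s r : ℝ → ℝ) (u u' w : ℝ → ℂ) : ℝ → ℂ := fun x =>
  -(w x + (((Q x : ℂ) - Complex.I * (r x : ℂ)) / (p x : ℂ)) * qd1 p Q r u u' x
    + ((((Q x) ^ 2 + (r x) ^ 2 : ℝ) : ℂ) / (p x : ℂ) - (s x : ℂ)) * u x)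

/-- The standing minimal regularity assumptions on the real-valued coefficients:
`1/√|p|, Q/√|p|, r/√|p| ∈ L²_loc(ℝ)`, `s ∈ L¹_loc(ℝ)` and `1/p ≠ 0` a.e. -/
structure Coeffs (p Q s r : ℝ → ℝ) : Prop where
  meas_p : Measurable p
  meas_Q : Measurable Q
  meas_s : Measurable s
  meas_r : Measurable r
  hp : LocallyIntegrable (fun x => 1 / |p x|) volume
  hQ : LocallyIntegrable (fun x => (Q x) ^ 2 / |p x|) volume
  hr : LocallyIntegrable (fun x => (r x) ^ 2 / |p x|) volume
  hs : LocallyIntegrable s volume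
  hp0 : ∀ᵐ x ∂(volume : Measure ℝ), p x ≠ 0

lemma qd1_add_eq (p Q r : ℝ → ℝ) (u₁ u₁' u₂ u₂' : ℝ → ℂ) (x : ℝ) :
    qd1 p Q r (fun y => u₁ y + u₂ y) (fun y => u₁' y + u₂' y) x
      = qd1 p Q r u₁ u₁' x + qd1 p Q r u₂ u₂' x := by
  simp only [qd1]; ring

lemma qd1_smul_eq (p Q r : ℝ → ℝ) (c : ℂ) (u u' : ℝ → ℂ) (x : ℝ) :
    qd1 p Q r (fun y => c * u y) (fun y => c * u' y) x = c * qd1 p Q r u u' x := by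
  simp only [qd1]; ring

lemma QDom.zero (p Q s r : ℝ → ℝ) : QDom p Q s r 0 0 0 := by
  refine ⟨HasLocDeriv.zero, HasLocDeriv.zero.congr_fun fun x => ?_⟩
  simp [qd1]

lemma QDom.add {p Q s r : ℝ → ℝ} {u₁ u₁' w₁ u₂ u₂' w₂ : ℝ → ℂ}
    (h₁ : QDom p Q s r u₁ u₁' w₁) (h₂ : QDom p Q s r u₂ u₂' w₂) :
    QDom p Q s r (fun x => u₁ x + u₂ x) (fun x => u₁' x + u₂' x) (fun x => w₁ x + w₂ x) :=
  ⟨h₁.1.add h₂.1, (h₁.2.add h₂.2).congr_fun (qd1_add_eq p Q r u₁ u₁' u₂ u₂')⟩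

lemma QDom.smul {p Q s r : ℝ → ℝ} {u u' w : ℝ → ℂ} (c : ℂ) (h : QDom p Q s r u u' w) :
    QDom p Q s r (fun x => c * u x) (fun x => c * u' x) (fun x => c * w x) :=
  ⟨h.1.const_mul c, (h.2.const_mul c).congr_fun (qd1_smul_eq p Q r c u u')⟩

lemma lExpr_zero (p Q s r : ℝ → ℝ) (x : ℝ) : lExpr p Q s r 0 0 0 x = 0 := by
  simp [lExpr, qd1]

lemma lExpr_add (p Q s r : ℝ → ℝ) (u₁ u₁' w₁ u₂ u₂' w₂ : ℝ → ℂ) (x : ℝ) :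
    lExpr p Q s r (fun y => u₁ y + u₂ y) (fun y => u₁' y + u₂' y) (fun y => w₁ y + w₂ y) x
      = lExpr p Q s r u₁ u₁' w₁ x + lExpr p Q s r u₂ u₂' w₂ x := by
  simp only [lExpr, qd1]; ring

lemma lExpr_smul (p Q s r : ℝ → ℝ) (c : ℂ) (u u' w : ℝ → ℂ) (x : ℝ) :
    lExpr p Q s r (fun y => c * u y) (fun y => c * u' y) (fun y => c * w y) x
      = c * lExpr p Q s r u u' w x := by
  simp only [lExpr, qd1]; ring

/-- The graph of the maximal operator `L` in `L²(ℝ) × L²(ℝ)`. -/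
def maxGraph (p Q s r : ℝ → ℝ) : Submodule ℂ (Hsp × Hsp) where
  carrier := {fg | ∃ u u' w, QDom p Q s r u u' w ∧ (⇑fg.1 =ᵐ[volume] u) ∧
    (⇑fg.2 =ᵐ[volume] lExpr p Q s r u u' w)}
  zero_mem' := by
    refine ⟨0, 0, 0, QDom.zero p Q s r, ?_, ?_⟩
    · filter_upwards [Lp.coeFn_zero ℂ 2 (volume : Measure ℝ)] with x hx using hx
    · filter_upwards [Lp.coeFn_zero ℂ 2 (volume : Measure ℝ)] with x hx
      rw [lExpr_zero]; exact hx
  add_mem' := by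
    rintro ⟨f₁, g₁⟩ ⟨f₂, g₂⟩ ⟨u₁, u₁', w₁, hq₁, hf₁, hg₁⟩ ⟨u₂, u₂', w₂, hq₂, hf₂, hg₂⟩
    refine ⟨fun x => u₁ x + u₂ x, fun x => u₁' x + u₂' x, fun x => w₁ x + w₂ x,
      hq₁.add hq₂, ?_, ?_⟩
    · filter_upwards [Lp.coeFn_add f₁ f₂, hf₁, hf₂] with x h1 h2 h3
      show (⇑(f₁ + f₂)) x = _
      rw [h1]; simp [h2, h3]
    · filter_upwards [Lp.coeFn_add g₁ g₂, hg₁, hg₂] with x h1 h2 h3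
      show (⇑(g₁ + g₂)) x = _
      rw [h1, lExpr_add]; simp [h2, h3]
  smul_mem' := by
    rintro c ⟨f, g⟩ ⟨u, u', w, hq, hf, hg⟩
    refine ⟨fun x => c * u x, fun x => c * u' x, fun x => c * w x, hq.smul c, ?_, ?_⟩
    · filter_upwards [Lp.coeFn_smul c f, hf] with x h1 h2
      show (⇑(c • f)) x = _
      rw [h1]; simp [h2]
    · filter_upwards [Lp.coeFn_smul c g, hg] with x h1 h2
      show (⇑(c • g)) x = _
      rw [h1, lExpr_smul]; simp [h2]

/-- The graph of the preminimal operator `L₀₀` (compactly supported members of the graph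
of the maximal operator). -/
def preminGraph (p Q s r : ℝ → ℝ) : Submodule ℂ (Hsp × Hsp) where
  carrier := {fg | ∃ u u' w, QDom p Q s r u u' w ∧ HasCompactSupport u ∧
    (⇑fg.1 =ᵐ[volume] u) ∧ (⇑fg.2 =ᵐ[volume] lExpr p Q s r u u' w)}
  zero_mem' := by
    refine ⟨0, 0, 0, QDom.zero p Q s r, by simpa using HasCompactSupport.zero, ?_, ?_⟩
    · filter_upwards [Lp.coeFn_zero ℂ 2 (volume : Measure ℝ)] with x hx using hx
    · filter_upwards [Lp.coeFn_zero ℂ 2 (volume : Measure ℝ)] with x hx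
      rw [lExpr_zero]; exact hx
  add_mem' := by
    rintro ⟨f₁, g₁⟩ ⟨f₂, g₂⟩ ⟨u₁, u₁', w₁, hq₁, hc₁, hf₁, hg₁⟩ ⟨u₂, u₂', w₂, hq₂, hc₂, hf₂, hg₂⟩
    refine ⟨fun x => u₁ x + u₂ x, fun x => u₁' x + u₂' x, fun x => w₁ x + w₂ x,
      hq₁.add hq₂, hc₁.add hc₂, ?_, ?_⟩
    · filter_upwards [Lp.coeFn_add f₁ f₂, hf₁, hf₂] with x h1 h2 h3
      show (⇑(f₁ + f₂)) x = _
      rw [h1]; simp [h2, h3]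
    · filter_upwards [Lp.coeFn_add g₁ g₂, hg₁, hg₂] with x h1 h2 h3
      show (⇑(g₁ + g₂)) x = _
      rw [h1, lExpr_add]; simp [h2, h3]
  smul_mem' := by
    rintro c ⟨f, g⟩ ⟨u, u', w, hq, hc, hf, hg⟩
    refine ⟨fun x => c * u x, fun x => c * u' x, fun x => c * w x, hq.smul c,
      hc.mono ?_, ?_, ?_⟩
    · intro x hx
      simp only [Function.mem_support, ne_eq] at hx ⊢
      exact fun h => hx (by rw [h, mul_zero])
    · filter_upwards [Lp.coeFn_smul c f, hf] with x h1 h2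
      show (⇑(c • f)) x = _
      rw [h1]; simp [h2]
    · filter_upwards [Lp.coeFn_smul c g, hg] with x h1 h2
      show (⇑(c • g)) x = _
      rw [h1, lExpr_smul]; simp [h2]

/-- The maximal operator `L`, an unbounded operator in `L²(ℝ)`. -/
def maxOp (p Q s r : ℝ → ℝ) : Hsp →ₗ.[ℂ] Hsp := (maxGraph p Q s r).toLinearPMap

/-- The preminimal operator `L₀₀`, the restriction of `L` to compactly supported functions. -/
def preminOp (p Q s r : ℝ → ℝ) : Hsp →ₗ.[ℂ] Hsp := (preminGraph p Q s r).toLinearPMap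

/-- The minimal operator `L₀`, the closure of `L₀₀`. -/
def minOp (p Q s r : ℝ → ℝ) : Hsp →ₗ.[ℂ] Hsp := (preminOp p Q s r).closure

/-- The boundary bilinear form `[u,v](t) = u(t)·conj(v^{[1]}(t)) − u^{[1]}(t)·conj(v(t))`. -/
def brkt (p Q r : ℝ → ℝ) (u u' v v' : ℝ → ℂ) (t : ℝ) : ℂ :=
  u t * (starRingEnd ℂ) (qd1 p Q r v v' t) - qd1 p Q r u u' t * (starRingEnd ℂ) (v t)

/-- `u, u', w` is a concrete representative of `f` as a member of `Dom(L)`: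
`u` is a representative of the `L²`-class `f`, `u` and `u^{[1]}` are locally absolutely
continuous (with derivatives `u'` and `w` respectively) and `l[u] ∈ L²(ℝ)`. -/
def IsMaxRep (p Q s r : ℝ → ℝ) (f : Hsp) (u u' w : ℝ → ℂ) : Prop :=
  QDom p Q s r u u' w ∧ (⇑f =ᵐ[volume] u) ∧ MemLp (lExpr p Q s r u u' w) 2 volume

/-- Function-level membership in the domain of the preminimal operator `L₀₀`:
`v` and `v^{[1]}` are locally absolutely continuous, `v, l[v] ∈ L²(ℝ)` and `v` has
compact support. -/
def MemPremin (p Q s r : ℝ → ℝ) (v : ℝ → ℂ) : Prop :=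
  ∃ v' w : ℝ → ℂ, QDom p Q s r v v' w ∧ MemLp v 2 volume ∧
    MemLp (lExpr p Q s r v v' w) 2 volume ∧ HasCompactSupport v

/-- `p ∈ W¹_{2,loc}(ℝ)` (for a real-valued function), with weak derivative `p' ∈ L²_loc`. -/
def W12locR (p p' : ℝ → ℝ) : Prop :=
  LocallyIntegrable p' volume ∧ LocallyIntegrable (fun x => (p' x) ^ 2) volume ∧
  ∀ x : ℝ, p x = p 0 + ∫ t in (0:ℝ)..x, p' t

/-- `φ ∈ W²₂(ℝ)` with compact support: `φ, φ', φ'' ∈ L²(ℝ)` where `φ'` and `φ''` are the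
first and second weak derivatives of `φ`, and `supp φ` is compact. -/
def W22cs (φ φ' φ'' : ℝ → ℝ) : Prop :=
  LocallyIntegrable φ' volume ∧ LocallyIntegrable φ'' volume ∧
  MemLp φ 2 volume ∧ MemLp φ' 2 volume ∧ MemLp φ'' 2 volume ∧
  (∀ x : ℝ, φ x = φ 0 + ∫ t in (0:ℝ)..x, φ' t) ∧
  (∀ x : ℝ, φ' x = φ' 0 + ∫ t in (0:ℝ)..x, φ'' t) ∧
  HasCompactSupport φ

/-- `p ∈ W¹₂([α,β]) = H¹([α,β])` with weak derivative `p'` on the interval `[α,β]`. -/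
def W12OnIcc (p p' : ℝ → ℝ) (α β : ℝ) : Prop :=
  IntegrableOn p' (Set.Icc α β) volume ∧ MemLp p' 2 (volume.restrict (Set.Icc α β)) ∧
  ∀ x ∈ Set.Icc α β, p x = p α + ∫ t in α..x, p' t

/-!
Writing `(φu)' = φ'u + φu'`, the quasi-derivative is `(φu)^[1] = φ u^[1] + p φ' u`, which is
locally absolutely continuous because `φ`, `φ'`, `p` and `u^[1]` are; the product rule for
locally absolutely continuous functions comes from Fubini on a square. Expanding then gives
`l[φu] = φ l[u] - 2 φ' u^[1] - p' φ' u - p φ'' u - 2 Q φ' u`. Every term is a function in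
`L²` on the compact set `supp φ` (`l[u]`, `φ'`, `φ''`, `p'`, `Q/√p`) times a function continuous
there (`φ`, `u^[1]`, `φ' u`, `p u`, `√p φ' u`), and vanishes off `supp φ`, so it lies in `L²(ℝ)`.
-/

theorem integral_mul_primitive_add_primitive_mul {𝕜 : Type*} [RCLike 𝕜] {g h : ℝ → 𝕜}
    {a b : ℝ} (hab : a ≤ b) (hg : IntervalIntegrable g volume a b)
    (hh : IntervalIntegrable h volume a b) :
    ∫ t in a..b, (g t * ∫ s in a..t, h s) + (∫ s in a..t, g s) * h t
      = (∫ t in a..b, g t) * ∫ t in a..b, h t := by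
  set S := Ioc a b
  have hSm : MeasurableSet S := measurableSet_Ioc
  have hgS : IntegrableOn g S := hg.1
  have hhS : IntegrableOn h S := hh.1
  have hprim {f : ℝ → 𝕜} (hf : IntervalIntegrable f volume a b) :
      ContinuousOn (fun t => ∫ s in a..t, f s) (Icc a b) := by
    simpa [uIcc_of_le hab] using intervalIntegral.continuousOn_primitive_interval' hf left_mem_uIcc
  -- The two terms of the integrand integrate `g t * h s` over the two triangles `s ≤ t` and
  -- `t < s` of the square `S × S`.
  set F : ℝ × ℝ → 𝕜 := {q | q.2 ≤ q.1}.indicator fun q => g q.1 * h q.2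
  have hF : Integrable F ((volume.restrict S).prod (volume.restrict S)) :=
    (hgS.mul_prod hhS).indicator (measurableSet_le measurable_snd measurable_fst)
  have hlower : ∀ t ∈ S, ∫ s in S, F (t, s) = g t * ∫ s in a..t, h s := by
    intro t ht
    have hF_t : (fun s => F (t, s)) = (Iic t).indicator fun s => g t * h s := by
      ext s; simp [F, indicator_apply]
    rw [hF_t, setIntegral_indicator measurableSet_Iic, Ioc_inter_Iic, min_eq_right ht.2,
      integral_const_mul, intervalIntegral.integral_of_le ht.1.le]
  have hupper : ∀ s ∈ S, ∫ t in S, F (t, s) = (∫ t in s..b, g t) * h s := by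
    intro s hs
    have hF_s : (fun t => F (t, s)) = (Ici s).indicator fun t => g t * h s := by
      ext t; simp [F, indicator_apply]
    have hSs : S ∩ Ici s = Icc s b := by
      ext t; simp only [S, mem_inter_iff, mem_Ioc, mem_Ici, mem_Icc]
      exact ⟨fun ht => ⟨ht.2, ht.1.2⟩, fun ht => ⟨⟨hs.1.trans_le ht.1, ht.2⟩, ht.1⟩⟩
    rw [hF_s, setIntegral_indicator measurableSet_Ici, hSs, integral_Icc_eq_integral_Ioc,
      integral_mul_const, intervalIntegral.integral_of_le hs.2]
  have hGh : IntegrableOn (fun t => (∫ s in a..t, g s) * h t) S :=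
    hhS.continuousOn_mul_of_subset (hprim hg) isCompact_Icc hSm Ioc_subset_Icc_self
  have hgH : IntegrableOn (fun t => g t * ∫ s in a..t, h s) S :=
    hgS.mul_continuousOn_of_subset (hprim hh) hSm isCompact_Icc Ioc_subset_Icc_self
  have hG'h : IntegrableOn (fun t => (∫ s in t..b, g s) * h t) S := by
    have hcont : ContinuousOn (fun t => ∫ s in t..b, g s) (Icc a b) :=
      (continuousOn_const.sub (hprim hg)).congr fun t ht =>
        (intervalIntegral.integral_interval_sub_left hg (hg.mono_set (by
          rw [uIcc_of_le hab, uIcc_of_le ht.1]; exact Icc_subset_Icc_right ht.2))).symm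
    exact hhS.continuousOn_mul_of_subset hcont isCompact_Icc hSm Ioc_subset_Icc_self
  calc ∫ t in a..b, (g t * ∫ s in a..t, h s) + (∫ s in a..t, g s) * h t
      = (∫ t in S, ∫ s in S, F (t, s)) + ∫ s in S, (∫ t in a..s, g t) * h s := by
        rw [intervalIntegral.integral_of_le hab, integral_add hgH hGh,
          setIntegral_congr_fun hSm hlower]
    _ = (∫ s in S, (∫ t in s..b, g t) * h s) + ∫ s in S, (∫ t in a..s, g t) * h s := by
        rw [integral_integral_swap (f := fun t s => F (t, s)) hF, setIntegral_congr_fun hSm hupper]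
    _ = ∫ s in S, (∫ t in a..b, g t) * h s := by
        rw [← integral_add hG'h hGh]
        refine setIntegral_congr_fun hSm fun s hs => ?_
        have hs' : s ∈ uIcc a b := by rw [uIcc_of_le hab]; exact Ioc_subset_Icc_self hs
        rw [← add_mul, add_comm, intervalIntegral.integral_add_adjacent_intervals
          (hg.mono_set (uIcc_subset_uIcc_left hs')) (hg.mono_set (uIcc_subset_uIcc_right hs'))]
    _ = (∫ t in a..b, g t) * ∫ t in a..b, h t := by
        rw [integral_const_mul, intervalIntegral.integral_of_le hab,
          intervalIntegral.integral_of_le hab]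

section Primitive

variable {E : Type*} [NormedAddCommGroup E] [NormedSpace ℝ E] {F f : ℝ → E} {U : Set ℝ}

theorem continuous_of_primitive (hf : LocallyIntegrable f volume)
    (hF : ∀ x, F x = F 0 + ∫ t in (0:ℝ)..x, f t) : Continuous F :=
  (continuous_const.add (intervalIntegral.continuous_primitive
    (fun _ _ => (hf.integrableOn_isCompact isCompact_uIcc).intervalIntegrable) 0)).congr
    fun x => (hF x).symm

variable [CompleteSpace E]

theorem ae_eq_zero_of_primitive_eqOn_zero (hf : LocallyIntegrable f volume)
    (hF : ∀ x, F x = F 0 + ∫ t in (0:ℝ)..x, f t) (hU : IsOpen U) (hF0 : EqOn F 0 U) :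
    ∀ᵐ x, x ∈ U → f x = 0 := by
  filter_upwards [LocallyIntegrable.ae_hasDerivAt_integral hf] with x hx hxU
  have hprim : (fun y => F 0 + ∫ t in (0 : ℝ)..y, f t) = F := funext fun y => (hF y).symm
  have hderiv : HasDerivAt F (f x) x := hprim ▸ (hx 0).const_add (F 0)
  exact hderiv.unique <| (hasDerivAt_const x (0 : E)).congr_of_eventuallyEq
    (hF0.eventuallyEq_of_mem (hU.mem_nhds hxU))

theorem eqOn_zero_of_primitive_eqOn_zero (hf : LocallyIntegrable f volume)
    (hF : ∀ x, F x = F 0 + ∫ t in (0:ℝ)..x, f t) (hfc : Continuous f) (hU : IsOpen U)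
    (hF0 : EqOn F 0 U) : EqOn f 0 U :=
  Measure.eqOn_open_of_ae_eq (μ := volume)
    ((ae_restrict_iff' hU.measurableSet).2 (ae_eq_zero_of_primitive_eqOn_zero hf hF hU hF0)) hU
    hfc.continuousOn continuousOn_const

end Primitive

namespace HasLocDeriv

variable {u v g h : ℝ → ℂ}

theorem continuous (hu : HasLocDeriv u g) : Continuous u :=
  continuous_of_primitive hu.1 hu.2

theorem integral_eq_sub (hu : HasLocDeriv u g) (a b : ℝ) : ∫ t in a..b, g t = u b - u a := by
  rw [← intervalIntegral.integral_interval_sub_left (hu.intervalIntegrable 0 b)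
    (hu.intervalIntegrable 0 a), hu.2 b, hu.2 a]
  ring

theorem integral_deriv_mul_eq_sub (hu : HasLocDeriv u g) (hv : HasLocDeriv v h) (a b : ℝ) :
    ∫ t in a..b, (g t * v t + u t * h t) = u b * v b - u a * v a := by
  wlog hab : a ≤ b generalizing a b
  · rw [intervalIntegral.integral_symm, this b a (le_of_not_ge hab)]
    ring
  have hsplit : EqOn (fun t => g t * v t + u t * h t)
      (fun t => (g t * v a + u a * h t)
        + ((g t * ∫ s in a..t, h s) + (∫ s in a..t, g s) * h t)) (uIcc a b) := fun t _ => by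
    simp only [hu.integral_eq_sub, hv.integral_eq_sub]
    ring
  have hgi := hu.intervalIntegrable a b
  have hhi := hv.intervalIntegrable a b
  rw [intervalIntegral.integral_congr hsplit, intervalIntegral.integral_add
      ((hgi.mul_const _).add (hhi.const_mul _)) ?_,
    intervalIntegral.integral_add (hgi.mul_const _) (hhi.const_mul _),
    integral_mul_primitive_add_primitive_mul hab hgi hhi, intervalIntegral.integral_mul_const,
    intervalIntegral.integral_const_mul, hu.integral_eq_sub, hv.integral_eq_sub]
  · ring
  · exact (hgi.mul_continuousOn
      (intervalIntegral.continuous_primitive hv.intervalIntegrable a).continuousOn).add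
      (hhi.continuousOn_mul
        (intervalIntegral.continuous_primitive hu.intervalIntegrable a).continuousOn)

theorem mul (hu : HasLocDeriv u g) (hv : HasLocDeriv v h) :
    HasLocDeriv (fun x => u x * v x) (fun x => g x * v x + u x * h x) := by
  refine ⟨?_, fun x => by rw [hu.integral_deriv_mul_eq_sub hv]; ring⟩
  have hli (f : ℝ → ℂ) (hf : LocallyIntegrable f volume) {c : ℝ → ℂ} (hc : Continuous c) :
      LocallyIntegrable (fun x => f x * c x) volume :=
    locallyIntegrableOn_univ.1 <| (locallyIntegrableOn_univ.2 hf).mul_continuousOn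
      hc.continuousOn isClosed_univ.isLocallyClosed
  exact (hli g hu.1 hv.continuous).add (by simpa only [mul_comm] using hli h hv.1 hu.continuous)

end HasLocDeriv

theorem hasLocDeriv_ofReal {f f' : ℝ → ℝ} (hf' : LocallyIntegrable f' volume)
    (hf : ∀ x : ℝ, f x = f 0 + ∫ t in (0:ℝ)..x, f' t) :
    HasLocDeriv (fun x => (f x : ℂ)) (fun x => (f' x : ℂ)) := by
  refine ⟨?_, fun x => ?_⟩
  · rw [locallyIntegrable_iff] at hf' ⊢
    exact fun K hK => (hf' K hK).ofReal
  · dsimp only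
    rw [intervalIntegral.integral_ofReal]
    exact_mod_cast hf x

theorem QDom.exists_mul {p Q s r : ℝ → ℝ} {P' ψ ψ' ψ'' u u' w : ℝ → ℂ}
    (hp : HasLocDeriv (fun x => (p x : ℂ)) P') (hψ : HasLocDeriv ψ ψ')
    (hψ' : HasLocDeriv ψ' ψ'') (hu : QDom p Q s r u u' w) :
    ∃ w₁, QDom p Q s r (fun x => ψ x * u x) (fun x => ψ' x * u x + ψ x * u' x) w₁ ∧
      ∀ x, p x ≠ 0 →
        lExpr p Q s r (fun x => ψ x * u x) (fun x => ψ' x * u x + ψ x * u' x) w₁ x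
          = ψ x * lExpr p Q s r u u' w x - 2 * (qd1 p Q r u u' x * ψ' x)
            - ψ' x * u x * P' x - (p x : ℂ) * u x * ψ'' x - 2 * ((Q x : ℂ) * (ψ' x * u x)) := by
  -- `(ψ u)^[1] = ψ u^[1] + p ψ' u`
  refine ⟨_, ⟨hψ.mul hu.1, ((hψ.mul hu.2).add ((hp.mul hψ').mul hu.1)).congr_fun fun x => ?_⟩,
    fun x hx => ?_⟩
  · simp only [qd1]
    ring
  · have hx' : (p x : ℂ) ≠ 0 := by exact_mod_cast hx
    simp only [lExpr, qd1]
    field_simp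
    ring

theorem MeasureTheory.MemLp.continuousOn_mul_of_ae_eq_zero_off {X 𝕜 : Type*}
    [TopologicalSpace X] [T2Space X] [MeasurableSpace X] [OpensMeasurableSpace X] [NormedRing 𝕜]
    [SecondCountableTopologyEither X 𝕜] {μ : Measure X} {q : ENNReal} {K : Set X} {f g : X → 𝕜}
    (hf : MemLp f q (μ.restrict K)) (hK : IsCompact K) (hg : ContinuousOn g K)
    (hzero : ∀ᵐ x ∂μ, x ∉ K → g x * f x = 0) :
    MemLp (fun x => g x * f x) q μ := by
  obtain ⟨C, hC⟩ := hK.exists_bound_of_continuousOn hg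
  have hK' : MemLp (fun x => g x * f x) q (μ.restrict K) :=
    hf.of_le_mul (c := C) ((hg.aestronglyMeasurable hK.measurableSet).mul hf.1)
      ((ae_restrict_iff' hK.measurableSet).2 <| ae_of_all _ fun x hx =>
        (norm_mul_le _ _).trans (mul_le_mul_of_nonneg_right (hC x hx) (norm_nonneg _)))
  refine ((memLp_indicator_iff_restrict hK.measurableSet).2 hK').ae_eq ?_
  filter_upwards [hzero] with x hx
  by_cases hxK : x ∈ K <;> simp [hxK, hx]

theorem memLp_two_restrict_of_locallyIntegrable_sq {X : Type*} [TopologicalSpace X]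
    [MeasurableSpace X] {μ : Measure X} {f : X → ℝ} {K : Set X} (hf : AEStronglyMeasurable f μ)
    (hsq : LocallyIntegrable (fun x => f x ^ 2) μ) (hK : IsCompact K) :
    MemLp f 2 (μ.restrict K) :=
  (memLp_two_iff_integrable_sq hf.restrict).2 (hsq.integrableOn_isCompact hK)

namespace W22cs

variable {φ φ' φ'' : ℝ → ℝ}

theorem eqOn_deriv_zero (hφ : W22cs φ φ' φ'') : EqOn φ' 0 (tsupport φ)ᶜ := by
  obtain ⟨hφ'li, hφ''li, -, -, -, hφ, hφ', -⟩ := hφ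
  exact eqOn_zero_of_primitive_eqOn_zero hφ'li hφ (continuous_of_primitive hφ''li hφ')
    (isClosed_tsupport φ).isOpen_compl fun x hx => image_eq_zero_of_notMem_tsupport hx

theorem ae_deriv2_eq_zero (hφ : W22cs φ φ' φ'') : ∀ᵐ x, x ∈ (tsupport φ)ᶜ → φ'' x = 0 := by
  have ⟨_, hφ''li, _, _, _, _, hφ', _⟩ := hφ
  exact ae_eq_zero_of_primitive_eqOn_zero hφ''li hφ' (isClosed_tsupport φ).isOpen_compl
    hφ.eqOn_deriv_zero

theorem memLp_ofReal_mul (hφ : W22cs φ φ' φ'') {f : ℝ → ℂ} (hf : MemLp f 2 volume) :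
    MemLp (fun x => (φ x : ℂ) * f x) 2 volume := by
  obtain ⟨hφ'li, -, -, -, -, hφ, -, hK⟩ := hφ
  exact (hf.restrict _).continuousOn_mul_of_ae_eq_zero_off hK
    (Complex.continuous_ofReal.comp (continuous_of_primitive hφ'li hφ)).continuousOn
    (ae_of_all _ fun x hx => by simp [image_eq_zero_of_notMem_tsupport hx])

end W22cs

theorem memLp_lExpr_cutoff_expansion {p Q s r p' φ φ' φ'' : ℝ → ℝ} {u u' w : ℝ → ℂ}
    (hc : Coeffs p Q s r) (hpW : W12locR p p') (hppos : ∀ x, 0 < p x) (hφ : W22cs φ φ' φ'')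
    (hq : QDom p Q s r u u' w) (hl2 : MemLp (lExpr p Q s r u u' w) 2 volume) :
    MemLp (fun x => (φ x : ℂ) * lExpr p Q s r u u' w x - 2 * (qd1 p Q r u u' x * φ' x)
      - φ' x * u x * p' x - p x * u x * φ'' x - 2 * (Q x * (φ' x * u x))) 2 volume := by
  obtain ⟨hp'li, hp'sq, hp⟩ := hpW
  have ⟨_, hφ''li, _, hφ'2, hφ''2, _, hφ', hK⟩ := hφ
  have hφ'0 := hφ.eqOn_deriv_zero
  have hφ'c : Continuous fun x => (φ' x : ℂ) :=
    Complex.continuous_ofReal.comp (continuous_of_primitive hφ''li hφ')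
  have hpc : Continuous p := continuous_of_primitive hp'li hp
  have hQp : MemLp (fun x => Q x / √(p x)) 2 (volume.restrict (tsupport φ)) := by
    refine memLp_two_restrict_of_locallyIntegrable_sq
      (hc.meas_Q.div hc.meas_p.sqrt).aestronglyMeasurable (hc.hQ.congr ?_) hK
    filter_upwards with x
    rw [div_pow, Real.sq_sqrt (hppos x).le, abs_of_pos (hppos x)]
  have hL1 := hφ.memLp_ofReal_mul hl2
  have hL2 : MemLp (fun x => qd1 p Q r u u' x * φ' x) 2 volume :=
    (hφ'2.ofReal.restrict _).continuousOn_mul_of_ae_eq_zero_off hK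
      hq.2.continuous.continuousOn (ae_of_all _ fun x hx => by simp [hφ'0 hx])
  have hL3 : MemLp (fun x => φ' x * u x * p' x) 2 volume :=
    (memLp_two_restrict_of_locallyIntegrable_sq hp'li.aestronglyMeasurable hp'sq hK).ofReal
      |>.continuousOn_mul_of_ae_eq_zero_off hK (hφ'c.mul hq.1.continuous).continuousOn
        (ae_of_all _ fun x hx => by simp [hφ'0 hx])
  have hL4 : MemLp (fun x => p x * u x * φ'' x) 2 volume := by
    refine (hφ''2.ofReal.restrict _).continuousOn_mul_of_ae_eq_zero_off hK
      ((Complex.continuous_ofReal.comp hpc).mul hq.1.continuous).continuousOn ?_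
    filter_upwards [hφ.ae_deriv2_eq_zero] with x hx hxK
    simp [hx hxK]
  -- `Q φ' u = (Q / √p) (√p φ' u)` with `Q / √p ∈ L²_loc`
  have hL5 : MemLp (fun x => Q x * (φ' x * u x)) 2 volume := by
    refine (hQp.ofReal.continuousOn_mul_of_ae_eq_zero_off hK
      ((Complex.continuous_ofReal.comp hpc.sqrt).mul (hφ'c.mul hq.1.continuous)).continuousOn
      (ae_of_all _ fun x hx => by simp [hφ'0 hx])).ae_eq (ae_of_all _ fun x => ?_)
    have hsqrt : (√(p x) : ℂ) ≠ 0 := by exact_mod_cast (Real.sqrt_pos.2 (hppos x)).ne'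
    change (√(p x) : ℂ) * ((φ' x : ℂ) * u x) * ((Q x / √(p x) : ℝ) : ℂ) = _
    push_cast
    field_simp
  exact (((hL1.sub (hL2.const_mul 2)).sub hL3).sub hL4).sub (hL5.const_mul 2)

/-- Suppose in addition `p > 0` and `p ∈ W¹_{2,loc}(ℝ)`. Then for every
compactly supported `φ ∈ W²₂(ℝ)` and every `u ∈ Dom(L)`, the product `φ·u` belongs to
`Dom(L₀₀)`: `φu` and `(φu)^{[1]}` are locally absolutely continuous, `l[φu] ∈ L²(ℝ)` and
`supp(φu)` is compact. -/
theorem cutoff_mul_mem_premin (p Q s r : ℝ → ℝ) (hc : Coeffs p Q s r)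
    (p' : ℝ → ℝ) (hpW : W12locR p p') (hppos : ∀ x : ℝ, 0 < p x)
    (φ φ' φ'' : ℝ → ℝ) (hφ : W22cs φ φ' φ'')
    (u u' w : ℝ → ℂ) (hq : QDom p Q s r u u' w) (hu2 : MemLp u 2 volume)
    (hl2 : MemLp (lExpr p Q s r u u' w) 2 volume) :
    MemPremin p Q s r (fun x => (φ x : ℂ) * u x) := by
  have ⟨hφ'li, hφ''li, _, _, _, hφid, hφ'id, hφcs⟩ := hφ
  obtain ⟨w₁, hQD, hl⟩ := hq.exists_mul (hasLocDeriv_ofReal hpW.1 hpW.2.2)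
    (hasLocDeriv_ofReal hφ'li hφid) (hasLocDeriv_ofReal hφ''li hφ'id)
  refine ⟨_, w₁, hQD, hφ.memLp_ofReal_mul hu2, ?_,
    (hφcs.comp_left Complex.ofReal_zero).mul_right⟩
  rw [funext fun x => hl x (hppos x).ne']
  exact memLp_lExpr_cutoff_expansion hc hpW hppos hφ hq hl2

end
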